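/- Let P be a polymatroid on [n], and let a, b be distinct bases of P such that there exist indices i, j with a_i < b_i and a_t = b_t for all t ∈ [n]\{i,j\}. Suppose i is externally active with respect to a and j is externally active with respect to b. Then for any k < min{i,j}: (1) k is internally active with respect to a iff k is internally active with respect to b; (2) k is externally active with respect to a iff k is externally active with respect to b. -/
import Mathlib


open Finset

/-- The `i`-th standard basis vector in `ℤ^n`. -/
def e {n : ℕ} (i : Fin n) : Fin n → ℤ := fun t => if t = i then 1 else 0

/-- Membership characterization of the polymatroid `P_f`. -/
def IsPolymatroid {n : ℕ} (P : Set (Fin n → ℤ)) (f : Finset (Fin n) → ℤ) : Prop :=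
  (f ∅ = 0) ∧ (∀ I J : Finset (Fin n), f (I ∪ J) + f (I ∩ J) ≤ f I + f J) ∧
    (∀ a : Fin n → ℤ, a ∈ P ↔
      (∀ I : Finset (Fin n), ∑ t ∈ I, a t ≤ f I) ∧ ∑ t, a t = f univ)

/-- `i` is internally active w.r.t. the basis `a` of `P` for the order `lt`. -/
def IntActO {n : ℕ} (P : Set (Fin n → ℤ)) (lt : Fin n → Fin n → Prop)
    (a : Fin n → ℤ) (i : Fin n) : Prop :=
  ∀ j : Fin n, lt j i → a - e i + e j ∉ P

/-- `i` is externally active w.r.t. the basis `a` of `P` for the order `lt`. -/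
def ExtActO {n : ℕ} (P : Set (Fin n → ℤ)) (lt : Fin n → Fin n → Prop)
    (a : Fin n → ℤ) (i : Fin n) : Prop :=
  ∀ j : Fin n, lt j i → a + e i - e j ∉ P

/-- Internal activity for the natural order on `Fin n`. -/
def IntAct {n : ℕ} (P : Set (Fin n → ℤ)) (a : Fin n → ℤ) (i : Fin n) : Prop :=
  IntActO P (· < ·) a i

/-- External activity for the natural order on `Fin n`. -/
def ExtAct {n : ℕ} (P : Set (Fin n → ℤ)) (a : Fin n → ℤ) (i : Fin n) : Prop :=
  ExtActO P (· < ·) a i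

noncomputable def oi {n : ℕ} (P : Set (Fin n → ℤ)) (a : Fin n → ℤ) : ℕ :=
  {i : Fin n | IntAct P a i ∧ ¬ ExtAct P a i}.ncard

noncomputable def oe {n : ℕ} (P : Set (Fin n → ℤ)) (a : Fin n → ℤ) : ℕ :=
  {i : Fin n | ExtAct P a i ∧ ¬ IntAct P a i}.ncard

noncomputable def ie {n : ℕ} (P : Set (Fin n → ℤ)) (a : Fin n → ℤ) : ℕ :=
  {i : Fin n | IntAct P a i ∧ ExtAct P a i}.ncard

/-- The polymatroid Tutte polynomial evaluated at `(x, y)`. -/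
noncomputable def TP {n : ℕ} (P : Set (Fin n → ℤ)) {R : Type*} [CommRing R]
    (x y : R) : R :=
  ∑ᶠ a ∈ P, x ^ oi P a * y ^ oe P a * (x + y - 1) ^ ie P a

lemma sum_e {n : ℕ} (I : Finset (Fin n)) (k : Fin n) :
    ∑ t ∈ I, e k t = if k ∈ I then (1 : ℤ) else 0 := by
  simp [e]

lemma mem_exch {n : ℕ} {P : Set (Fin n → ℤ)} {f : Finset (Fin n) → ℤ}
    (hP : IsPolymatroid P f) {a : Fin n → ℤ} (ha : a ∈ P) (k j' : Fin n) :
    a + e k - e j' ∈ P ↔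
      ∀ I : Finset (Fin n), k ∈ I → j' ∉ I → ∑ t ∈ I, a t < f I := by
  obtain ⟨hf0, hsub, hmem⟩ := hP
  obtain ⟨haI, hasum⟩ := (hmem a).mp ha
  rw [hmem]
  have hsum : ∀ I : Finset (Fin n), ∑ t ∈ I, (a + e k - e j') t
      = ∑ t ∈ I, a t + (if k ∈ I then 1 else 0) - (if j' ∈ I then 1 else 0) := by
    intro I
    simp only [Pi.sub_apply, Pi.add_apply, Finset.sum_sub_distrib,
      Finset.sum_add_distrib, sum_e]
  constructor
  · rintro ⟨h1, h2⟩ I hk hj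
    have := h1 I
    rw [hsum I] at this
    simp only [hk, hj, if_true, if_false] at this
    linarith
  · intro h
    refine ⟨fun I => ?_, ?_⟩
    · rw [hsum I]
      by_cases hk : k ∈ I
      · by_cases hj : j' ∈ I
        · have := haI I
          simp only [hk, hj, if_true]
          linarith
        · have := h I hk hj
          simp only [hk, hj, if_true, if_false]
          linarith
      · have := haI I
        split_ifs <;> linarith
    · rw [hsum univ]
      simp [hasum]

theorem stmt7 {n : ℕ} (P : Set (Fin n → ℤ)) (f : Finset (Fin n) → ℤ)
    (hP : IsPolymatroid P f) (a b : Fin n → ℤ) (ha : a ∈ P) (hb : b ∈ P)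
    (hab : a ≠ b) (i j : Fin n) (hij : a i < b i)
    (hagree : ∀ t : Fin n, t ≠ i → t ≠ j → a t = b t)
    (hia : ExtAct P a i) (hjb : ExtAct P b j)
    (k : Fin n) (hki : k < i) (hkj : k < j) :
    (IntAct P a k ↔ IntAct P b k) ∧ (ExtAct P a k ↔ ExtAct P b k) := by
  obtain ⟨hf0, hsub, hmem⟩ := hP
  have hP' : IsPolymatroid P f := ⟨hf0, hsub, hmem⟩
  obtain ⟨haC, hasum⟩ := (hmem a).mp ha
  obtain ⟨hbC, hbsum⟩ := (hmem b).mp hb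
  set c : ℤ := b i - a i with hc_def
  have hc : 0 < c := by simp only [hc_def]; linarith
  have hij' : i ≠ j := by
    rintro rfl
    have h0 : ∑ t, (b t - a t) = b i - a i := by
      apply Finset.sum_eq_single_of_mem i (Finset.mem_univ i)
      intro t _ ht
      rw [hagree t ht ht]; ring
    rw [Finset.sum_sub_distrib, hasum, hbsum, sub_self] at h0
    linarith
  have hbj : b j - a j = -c := by
    have h0 : ∑ t, (b t - a t) = (b i - a i) + (b j - a j) := by
      have h0' : ∑ t ∈ ({i, j} : Finset (Fin n)), (b t - a t) = ∑ t, (b t - a t) := by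
        apply Finset.sum_subset (Finset.subset_univ _)
        intro t _ ht
        simp only [Finset.mem_insert, Finset.mem_singleton, not_or] at ht
        rw [hagree t ht.1 ht.2]; ring
      rw [← h0', Finset.sum_pair hij']
    rw [Finset.sum_sub_distrib, hasum, hbsum, sub_self] at h0
    simp only [hc_def]
    linarith
  have hdiff : ∀ t, b t - a t = c * e i t - c * e j t := by
    intro t
    by_cases hti : t = i
    · subst hti; simp [e, hij', hc_def]
    · by_cases htj : t = j
      · subst htj
        simp only [e, if_neg hti, eq_self_iff_true, if_true, mul_one, mul_zero]
        linarith
      · rw [hagree t hti htj]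
        simp [e, hti, htj]
  have hsumI : ∀ I : Finset (Fin n), ∑ t ∈ I, b t =
      ∑ t ∈ I, a t + (if i ∈ I then c else 0) - (if j ∈ I then c else 0) := by
    intro I
    have h1 : ∑ t ∈ I, b t - ∑ t ∈ I, a t
        = (if i ∈ I then c else 0) - (if j ∈ I then c else 0) := by
      rw [← Finset.sum_sub_distrib]
      calc ∑ t ∈ I, (b t - a t) = ∑ t ∈ I, (c * e i t - c * e j t) := by
            simp only [hdiff]
        _ = c * ∑ t ∈ I, e i t - c * ∑ t ∈ I, e j t := by
            rw [Finset.sum_sub_distrib, Finset.mul_sum, Finset.mul_sum]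
        _ = _ := by rw [sum_e, sum_e]; split_ifs <;> ring
    linarith
  -- tight sets
  set TA : Finset (Fin n) → Prop := fun I => ∑ t ∈ I, a t = f I with hTAdef
  set TB : Finset (Fin n) → Prop := fun I => ∑ t ∈ I, b t = f I with hTBdef
  have htAi : ∀ I, TA I → i ∈ I → j ∈ I := by
    intro I hI hi
    by_contra hj
    have h1 := hbC I
    rw [hsumI I, if_pos hi, if_neg hj] at h1
    simp only [hTAdef] at hI
    linarith
  have htBj : ∀ I, TB I → j ∈ I → i ∈ I := by
    intro I hI hj
    by_contra hi
    have h1 := haC I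
    have h2 := hsumI I
    rw [if_pos hj, if_neg hi] at h2
    simp only [hTBdef] at hI
    linarith
  have hTABi : ∀ I, TA I → i ∈ I → TB I := by
    intro I hI hi
    have hj := htAi I hI hi
    have h2 := hsumI I
    rw [if_pos hj, if_pos hi] at h2
    simp only [hTAdef] at hI
    simp only [hTBdef]
    linarith
  have hTABj : ∀ I, TA I → j ∉ I → TB I := by
    intro I hI hj
    have hi : i ∉ I := fun hi => hj (htAi I hI hi)
    have h2 := hsumI I
    rw [if_neg hj, if_neg hi] at h2
    simp only [hTAdef] at hI
    simp only [hTBdef]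
    linarith
  have hTBAj : ∀ I, TB I → j ∈ I → TA I := by
    intro I hI hj
    have hi := htBj I hI hj
    have h2 := hsumI I
    rw [if_pos hj, if_pos hi] at h2
    simp only [hTBdef] at hI
    simp only [hTAdef]
    linarith
  have hTBAi : ∀ I, TB I → i ∉ I → TA I := by
    intro I hI hi
    have hj : j ∉ I := fun hj => hi (htBj I hI hj)
    have h2 := hsumI I
    rw [if_neg hj, if_neg hi] at h2
    simp only [hTBdef] at hI
    simp only [hTAdef]
    linarith
  have hTAu : ∀ I J, TA I → TA J → TA (I ∪ J) := by
    intro I J hI hJ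
    have h1 := hsub I J
    have h2 : ∑ t ∈ I ∪ J, a t + ∑ t ∈ I ∩ J, a t = ∑ t ∈ I, a t + ∑ t ∈ J, a t :=
      Finset.sum_union_inter
    have h3 := haC (I ∪ J)
    have h4 := haC (I ∩ J)
    simp only [hTAdef] at hI hJ ⊢
    linarith
  have hTBu : ∀ I J, TB I → TB J → TB (I ∪ J) := by
    intro I J hI hJ
    have h1 := hsub I J
    have h2 : ∑ t ∈ I ∪ J, b t + ∑ t ∈ I ∩ J, b t = ∑ t ∈ I, b t + ∑ t ∈ J, b t :=
      Finset.sum_union_inter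
    have h3 := hbC (I ∪ J)
    have h4 := hbC (I ∩ J)
    simp only [hTBdef] at hI hJ ⊢
    linarith
  -- common tight set witnesses
  have hT : ∀ j' : Fin n, j' < i → j' < j →
      ∃ T, TA T ∧ TB T ∧ i ∈ T ∧ j ∈ T ∧ j' ∉ T := by
    intro j' h1 h2
    have h3 := hia j' h1
    rw [mem_exch hP' ha i j'] at h3
    push_neg at h3
    obtain ⟨T, hiT, hj'T, hle⟩ := h3
    have hTA : TA T := le_antisymm (haC T) hle
    exact ⟨T, hTA, hTABi T hTA hiT, hiT, htAi T hTA hiT, hj'T⟩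
  -- external key
  have key_ext : ∀ j' : Fin n, j' < k →
      ((a + e k - e j' ∈ P) ↔ (b + e k - e j' ∈ P)) := by
    intro j' hj'
    obtain ⟨T, hTAT, hTBT, hiT, hjT, hj'T⟩ := hT j' (hj'.trans hki) (hj'.trans hkj)
    rw [mem_exch hP' ha, mem_exch hP' hb]
    constructor
    · intro h I hkI hj'I
      rcases lt_or_eq_of_le (hbC I) with h' | h'
      · exact h'
      exfalso
      have hTBI : TB I := h'
      by_cases hTAI : TA I
      · exact absurd hTAI (ne_of_lt (h I hkI hj'I))
      · have hjI : j ∉ I := fun hx => hTAI (hTBAj I hTBI hx)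
        have hU : TB (I ∪ T) := hTBu I T hTBI hTBT
        have hUA : TA (I ∪ T) := hTBAj _ hU (Finset.mem_union_right I hjT)
        have := h (I ∪ T) (Finset.mem_union_left T hkI)
          (by simp [hj'I, hj'T])
        exact absurd hUA (ne_of_lt this)
    · intro h I hkI hj'I
      rcases lt_or_eq_of_le (haC I) with h' | h'
      · exact h'
      exfalso
      have hTAI : TA I := h'
      by_cases hTBI : TB I
      · exact absurd hTBI (ne_of_lt (h I hkI hj'I))
      · have hU : TA (I ∪ T) := hTAu I T hTAI hTAT
        have hUB : TB (I ∪ T) := hTABi _ hU (Finset.mem_union_right I hiT)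
        have := h (I ∪ T) (Finset.mem_union_left T hkI)
          (by simp [hj'I, hj'T])
        exact absurd hUB (ne_of_lt this)
  -- internal key
  have key_int : ∀ j' : Fin n, j' < k →
      ((a - e k + e j' ∈ P) ↔ (b - e k + e j' ∈ P)) := by
    intro j' hj'
    obtain ⟨T, hTAT, hTBT, hiT, hjT, hkT⟩ := hT k hki hkj
    have heqa : a - e k + e j' = a + e j' - e k := by ring
    have heqb : b - e k + e j' = b + e j' - e k := by ring
    rw [heqa, heqb, mem_exch hP' ha, mem_exch hP' hb]
    constructor
    · intro h I hj'I hkI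
      rcases lt_or_eq_of_le (hbC I) with h' | h'
      · exact h'
      exfalso
      have hTBI : TB I := h'
      by_cases hTAI : TA I
      · exact absurd hTAI (ne_of_lt (h I hj'I hkI))
      · have hU : TB (I ∪ T) := hTBu I T hTBI hTBT
        have hUA : TA (I ∪ T) := hTBAj _ hU (Finset.mem_union_right I hjT)
        have := h (I ∪ T) (Finset.mem_union_left T hj'I)
          (by simp [hkI, hkT])
        exact absurd hUA (ne_of_lt this)
    · intro h I hj'I hkI
      rcases lt_or_eq_of_le (haC I) with h' | h'
      · exact h'
      exfalso
      have hTAI : TA I := h'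
      by_cases hTBI : TB I
      · exact absurd hTBI (ne_of_lt (h I hj'I hkI))
      · have hU : TA (I ∪ T) := hTAu I T hTAI hTAT
        have hUB : TB (I ∪ T) := hTABi _ hU (Finset.mem_union_right I hiT)
        have := h (I ∪ T) (Finset.mem_union_left T hj'I)
          (by simp [hkI, hkT])
        exact absurd hUB (ne_of_lt this)
  constructor
  · exact ⟨fun h j' hj' hm => h j' hj' ((key_int j' hj').mpr hm),
      fun h j' hj' hm => h j' hj' ((key_int j' hj').mp hm)⟩
  · exact ⟨fun h j' hj' hm => h j' hj' ((key_ext j' hj').mpr hm),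
      fun h j' hj' hm => h j' hj' ((key_ext j' hj').mp hm)⟩
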